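/- The Knuth-like relations hold for ribbon Schur operators: if i < j < k or i > j > k, then u_i u_k u_j equals u_k u_i u_j or u_j u_i u_k (according as u_i and u_k commute or not), and u_j u_k u_i equals u_j u_i u_k or u_k u_i u_j (according as u_i and u_k commute or not). -/

import Mathlib

open scoped Classical

noncomputable section RibbonSchur

/-- The base field `ℂ(q)` of rational functions. -/
abbrev K : Type := RatFunc ℂ

/-- The variable `q`. -/
def q : K := RatFunc.X

/-- The Fock space: free `K`-module on the set of partitions (Young diagrams). -/
abbrev F : Type := YoungDiagram →₀ K

/-- Cells of the skew shape `mu / lam`. -/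
def skewCells (lam mu : YoungDiagram) : Finset (ℕ × ℕ) := mu.cells \ lam.cells

/-- Two cells are adjacent if they share an edge. -/
def CellAdj (a b : ℕ × ℕ) : Prop :=
  (a.1 = b.1 ∧ (a.2 = b.2 + 1 ∨ b.2 = a.2 + 1)) ∨
  (a.2 = b.2 ∧ (a.1 = b.1 + 1 ∨ b.1 = a.1 + 1))

/-- `mu / lam` is an `n`-ribbon with head (top-right box, of maximal content) on diagonal `i`:
a connected skew shape of size `n` containing no `2 × 2` square. -/
def IsRibbon (n : ℕ) (lam mu : YoungDiagram) (i : ℤ) : Prop :=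
  lam ≤ mu ∧ (skewCells lam mu).card = n ∧
  (∀ a ∈ skewCells lam mu, ∀ b ∈ skewCells lam mu,
    Relation.ReflTransGen
      (fun x y => x ∈ skewCells lam mu ∧ y ∈ skewCells lam mu ∧ CellAdj x y) a b) ∧
  (¬ ∃ r c : ℕ, (r, c) ∈ skewCells lam mu ∧ (r + 1, c) ∈ skewCells lam mu ∧
      (r, c + 1) ∈ skewCells lam mu ∧ (r + 1, c + 1) ∈ skewCells lam mu) ∧
  (∃ p ∈ skewCells lam mu, (p.2 : ℤ) - (p.1 : ℤ) = i ∧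
    ∀ p' ∈ skewCells lam mu, (p'.2 : ℤ) - (p'.1 : ℤ) ≤ (p.2 : ℤ) - (p.1 : ℤ))

/-- The spin of the skew shape `mu / lam`: number of occupied rows minus 1. -/
def spin (lam mu : YoungDiagram) : ℕ := ((skewCells lam mu).image Prod.fst).card - 1

/-- The spin, as an integer. -/
def spinZ (lam mu : YoungDiagram) : ℤ := (((skewCells lam mu).image Prod.fst).card : ℤ) - 1

/-- The image of the basis vector `lam` under the ribbon Schur operator `u_i`. -/
def uVec (n : ℕ) (i : ℤ) (lam : YoungDiagram) : F :=
  if h : ∃ mu, IsRibbon n lam mu i then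
    q ^ spin lam (Classical.choose h) • Finsupp.single (Classical.choose h) 1
  else 0

/-- The ribbon Schur operator `u_i`, adding an `n`-ribbon with head on diagonal `i`,
weighted by `q ^ spin`. -/
def u (n : ℕ) (i : ℤ) : Module.End K F :=
  Finsupp.lsum K fun lam => LinearMap.toSpanSingleton K F (uVec n i lam)

/-- The image of the basis vector `lam` under the adjoint operator `d_i`. -/
def dVec (n : ℕ) (i : ℤ) (lam : YoungDiagram) : F :=
  if h : ∃ mu, IsRibbon n mu lam i then
    q ^ spin (Classical.choose h) lam • Finsupp.single (Classical.choose h) 1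
  else 0

/-- The adjoint `d_i` of the ribbon Schur operator `u_i` (with respect to the inner
product making partitions orthonormal): it removes an `n`-ribbon with head on diagonal `i`. -/
def d (n : ℕ) (i : ℤ) : Module.End K F :=
  Finsupp.lsum K fun lam => LinearMap.toSpanSingleton K F (dVec n i lam)

/-- The monomial `u_{i_k} ⋯ u_{i_1}` for the list `l = [i_k, …, i_1]` (leftmost factor
applied last). -/
def ribbonMonomial (n : ℕ) (l : List ℤ) : Module.End K F := (l.map (u n)).prod

/-- The monomial `d_{i_1} ⋯ d_{i_k}` for the list `l = [i_1, …, i_k]`. -/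
def dMonomial (n : ℕ) (l : List ℤ) : Module.End K F := (l.map (d n)).prod

/-- The image of the basis vector `lam` under
`h_k(u) = ∑_{i_1 < ⋯ < i_k} u_{i_k} ⋯ u_{i_1}` (a locally finite sum). -/
def hVec (n k : ℕ) (lam : YoungDiagram) : F :=
  ∑ᶠ l : List ℤ,
    if l.Pairwise (· > ·) ∧ l.length = k then ribbonMonomial n l (Finsupp.single lam 1) else 0

/-- The noncommutative homogeneous symmetric function
`h_k(u) = ∑_{i_1 < ⋯ < i_k} u_{i_k} ⋯ u_{i_1}` in the ribbon Schur operators. -/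
def hOp (n k : ℕ) : Module.End K F :=
  Finsupp.lsum K fun lam => LinearMap.toSpanSingleton K F (hVec n k lam)

/-- The image of the basis vector `lam` under
`h_k^⊥(u) = ∑_{i_1 < ⋯ < i_k} d_{i_1} ⋯ d_{i_k}`. -/
def hPerpVec (n k : ℕ) (lam : YoungDiagram) : F :=
  ∑ᶠ l : List ℤ,
    if l.Pairwise (· < ·) ∧ l.length = k then dMonomial n l (Finsupp.single lam 1) else 0

/-- The adjoint `h_k^⊥(u) = ∑_{i_1 < ⋯ < i_k} d_{i_1} ⋯ d_{i_k}`,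
removing a horizontal ribbon strip of size `k`. -/
def hPerp (n k : ℕ) : Module.End K F :=
  Finsupp.lsum K fun lam => LinearMap.toSpanSingleton K F (hPerpVec n k lam)



namespace RS


/-- content/diagonal of a cell -/
def dg (x : ℕ × ℕ) : ℤ := (x.2 : ℤ) - x.1

lemma dg_mk (r c : ℕ) : dg (r, c) = (c : ℤ) - r := rfl

/-- row `r` is occupied on diagonal `d` -/
def inD (lam : YoungDiagram) (d : ℤ) (r : ℕ) : Prop :=
  0 ≤ (r : ℤ) + d ∧ (r, ((r : ℤ) + d).toNat) ∈ lam

lemma mem_iff_inD {lam : YoungDiagram} {x : ℕ × ℕ} : x ∈ lam ↔ inD lam (dg x) x.1 := by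
  obtain ⟨r, c⟩ := x
  have h1 : ((r : ℤ) + ((c:ℤ) - r)).toNat = c := by omega
  simp only [inD, dg, h1]
  constructor
  · intro h; exact ⟨by omega, h⟩
  · exact fun h => h.2

lemma exists_not_inD (lam : YoungDiagram) (d : ℤ) :
    ∃ r : ℕ, 0 ≤ (r : ℤ) + d ∧ ¬ inD lam d r := by
  set r : ℕ := (-d).toNat + lam.cells.sup Prod.fst + 1 with hr
  refine ⟨r, by omega, ?_⟩
  rintro ⟨-, hmem⟩
  have h2 : Prod.fst (r, ((r:ℤ) + d).toNat) ≤ lam.cells.sup Prod.fst :=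
    Finset.le_sup (f := Prod.fst) ((YoungDiagram.mem_cells _).2 hmem)
  dsimp only at h2
  omega

/-- first free row on diagonal `d` -/
noncomputable def bd (lam : YoungDiagram) (d : ℤ) : ℕ :=
  sInf {r : ℕ | 0 ≤ (r : ℤ) + d ∧ ¬ inD lam d r}

lemma bd_spec (lam : YoungDiagram) (d : ℤ) :
    0 ≤ (bd lam d : ℤ) + d ∧ ¬ inD lam d (bd lam d) := by
  have h := exists_not_inD lam d
  exact Nat.sInf_mem h

lemma bd_valid (lam : YoungDiagram) (d : ℤ) : 0 ≤ (bd lam d : ℤ) + d := (bd_spec lam d).1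

lemma inD_mono_row {lam : YoungDiagram} {d : ℤ} {r r' : ℕ} (h : inD lam d r)
    (hle : r' ≤ r) (hv : 0 ≤ (r' : ℤ) + d) : inD lam d r' := by
  refine ⟨hv, ?_⟩
  exact lam.up_left_mem hle (by omega) h.2

lemma inD_iff {lam : YoungDiagram} {d : ℤ} {r : ℕ} :
    inD lam d r ↔ 0 ≤ (r : ℤ) + d ∧ r < bd lam d := by
  constructor
  · intro h
    refine ⟨h.1, ?_⟩
    by_contra hlt
    exact (bd_spec lam d).2 (inD_mono_row h (by omega) (bd_valid lam d))
  · rintro ⟨hv, hlt⟩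
    by_contra hni
    have : r ∈ {r : ℕ | 0 ≤ (r : ℤ) + d ∧ ¬ inD lam d r} := ⟨hv, hni⟩
    have h4 : bd lam d ≤ r := Nat.sInf_le this
    omega

lemma mem_iff_lt_bd {lam : YoungDiagram} {x : ℕ × ℕ} :
    x ∈ lam ↔ x.1 < bd lam (dg x) := by
  rw [mem_iff_inD, inD_iff]
  have : 0 ≤ (x.1 : ℤ) + dg x := by simp [dg]
  tauto

/-- staircase: `bd` drops by 0 or 1 as `d` increases -/
lemma bd_succ_le (lam : YoungDiagram) (d : ℤ) : bd lam (d + 1) ≤ bd lam d := by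
  by_contra h
  push_neg at h
  have hin : inD lam (d + 1) (bd lam d) := inD_iff.2 ⟨by have := bd_valid lam d; omega, h⟩
  have : inD lam d (bd lam d) := by
    refine ⟨bd_valid lam d, ?_⟩
    refine lam.up_left_mem le_rfl ?_ hin.2
    omega
  exact (bd_spec lam d).2 this

lemma bd_le_succ_add (lam : YoungDiagram) (d : ℤ) : bd lam d ≤ bd lam (d + 1) + 1 := by
  by_contra h
  push_neg at h
  have hin : inD lam d (bd lam (d + 1) + 1) :=
    inD_iff.2 ⟨by have := bd_valid lam (d + 1); push_cast; omega, h⟩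
  have : inD lam (d + 1) (bd lam (d + 1)) := by
    refine ⟨bd_valid lam (d + 1), ?_⟩
    refine lam.up_left_mem (by omega) ?_ hin.2
    omega
  exact (bd_spec lam (d + 1)).2 this

lemma bd_anti (lam : YoungDiagram) : Antitone (bd lam) := by
  have h : ∀ d : ℤ, ∀ m : ℕ, bd lam (d + m) ≤ bd lam d := by
    intro d m
    induction m with
    | zero => simp
    | succ k ih =>
      have h1 := bd_succ_le lam (d + k)
      have h2 : d + ((k + 1 : ℕ) : ℤ) = (d + k) + 1 := by push_cast; ring
      rw [h2]
      omega
  intro a b hab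
  have := h a (b - a).toNat
  have h3 : a + ((b - a).toNat : ℤ) = b := by omega
  rwa [h3] at this

lemma bd_pred_of_zero {lam : YoungDiagram} {d : ℤ} (h : (bd lam d : ℤ) + d = 0) :
    bd lam (d - 1) = bd lam d + 1 := by
  have h1 : bd lam (d - 1) ≤ bd lam d + 1 := by
    have := bd_le_succ_add lam (d - 1); simpa using this
  have h2 := bd_valid lam (d - 1)
  omega


noncomputable def cellOf (lam : YoungDiagram) (d : ℤ) : ℕ × ℕ :=
  (bd lam d, ((bd lam d : ℤ) + d).toNat)

lemma eq_cellOf_iff {lam : YoungDiagram} {d : ℤ} {x : ℕ × ℕ} :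
    x = cellOf lam d ↔ x.1 = bd lam d ∧ (x.2 : ℤ) = (x.1 : ℤ) + d := by
  have hv := bd_valid lam d
  obtain ⟨a, b⟩ := x
  simp only [cellOf, Prod.mk.injEq]
  constructor
  · rintro ⟨rfl, rfl⟩; constructor <;> simp <;> omega
  · rintro ⟨rfl, h⟩
    simp at h ⊢
    omega

lemma dg_cellOf (lam : YoungDiagram) (d : ℤ) : dg (cellOf lam d) = d := by
  have hv := bd_valid lam d
  simp only [dg, cellOf]
  omega

lemma cellOf_not_mem (lam : YoungDiagram) (d : ℤ) : cellOf lam d ∉ lam := by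
  rw [mem_iff_lt_bd, dg_cellOf]
  simp [cellOf]

def band (n : ℕ) (i : ℤ) : Finset ℤ := Finset.Icc (i - n + 1) i

lemma mem_band {n : ℕ} {i d : ℤ} : d ∈ band n i ↔ i - n + 1 ≤ d ∧ d ≤ i :=
  Finset.mem_Icc

noncomputable def shape (lam : YoungDiagram) (n : ℕ) (i : ℤ) : Finset (ℕ × ℕ) :=
  lam.cells ∪ (band n i).image (cellOf lam)

lemma mem_shape {lam : YoungDiagram} {n : ℕ} {i : ℤ} {x : ℕ × ℕ} :
    x ∈ shape lam n i ↔ x ∈ lam ∨ ∃ d ∈ band n i, x = cellOf lam d := by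
  simp [shape, eq_comm]

def canAdd (lam : YoungDiagram) (n : ℕ) (i : ℤ) : Prop :=
  IsLowerSet (↑(shape lam n i) : Set (ℕ × ℕ))

noncomputable def addR (lam : YoungDiagram) (n : ℕ) (i : ℤ) (h : canAdd lam n i) : YoungDiagram :=
  ⟨shape lam n i, h⟩

lemma mem_addR {lam : YoungDiagram} {n : ℕ} {i : ℤ} {h : canAdd lam n i} {x : ℕ × ℕ} :
    x ∈ addR lam n i h ↔ x ∈ lam ∨ ∃ d ∈ band n i, x = cellOf lam d := by
  rw [← mem_shape]; rfl

lemma bd_eq {X : YoungDiagram} {d : ℤ} {b : ℕ} (h1 : 0 ≤ (b : ℤ) + d)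
    (h2 : ¬ inD X d b) (h3 : ∀ r : ℕ, 0 ≤ (r : ℤ) + d → r < b → inD X d r) :
    bd X d = b := by
  have hle : bd X d ≤ b := by
    by_contra hgt
    exact h2 (inD_iff.2 ⟨h1, by omega⟩)
  by_contra hne
  exact (bd_spec X d).2 (h3 _ (bd_valid X d) (by omega))

lemma inD_addR {lam : YoungDiagram} {n : ℕ} {i : ℤ} {h : canAdd lam n i} {d : ℤ} {r : ℕ} :
    inD (addR lam n i h) d r ↔ inD lam d r ∨ (d ∈ band n i ∧ r = bd lam d ∧ 0 ≤ (r : ℤ) + d) := by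
  constructor
  · rintro ⟨hv, hmem⟩
    rcases mem_addR.1 hmem with hl | ⟨d', hd', hx⟩
    · exact Or.inl ⟨hv, hl⟩
    · right
      rw [eq_cellOf_iff] at hx
      obtain ⟨h1, h2⟩ := hx
      dsimp only at h1 h2
      have hd : d' = d := by omega
      subst hd
      exact ⟨hd', h1, hv⟩
  · rintro (⟨hv, hmem⟩ | ⟨hd, rfl, hv⟩)
    · exact ⟨hv, mem_addR.2 (Or.inl hmem)⟩
    · refine ⟨hv, mem_addR.2 (Or.inr ⟨d, hd, ?_⟩)⟩
      rw [eq_cellOf_iff]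
      constructor
      · rfl
      · simp only []
        omega
  
lemma bd_addR {lam : YoungDiagram} {n : ℕ} {i : ℤ} (h : canAdd lam n i) (d : ℤ) :
    bd (addR lam n i h) d = bd lam d + (if d ∈ band n i then 1 else 0) := by
  by_cases hd : d ∈ band n i
  · simp only [hd, if_true]
    refine bd_eq (by have := bd_valid lam d; omega) ?_ ?_
    · rw [inD_addR]
      rintro (hin | ⟨-, hr, -⟩)
      · rw [inD_iff] at hin; omega
      · omega
    · intro r hv hr
      rw [inD_addR]
      rcases Nat.lt_or_ge r (bd lam d) with h1 | h1
      · exact Or.inl (inD_iff.2 ⟨hv, h1⟩)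
      · exact Or.inr ⟨hd, by omega, hv⟩
  · simp only [hd, if_false, add_zero]
    refine bd_eq (bd_valid lam d) ?_ ?_
    · rw [inD_addR]
      rintro (hin | ⟨hmem, -, -⟩)
      · rw [inD_iff] at hin; omega
      · exact hd hmem
    · intro r hv hr
      exact inD_addR.2 (Or.inl (inD_iff.2 ⟨hv, hr⟩))

lemma bd_ext {X Y : YoungDiagram} (h : ∀ d, bd X d = bd Y d) : X = Y := by
  have : X.cells = Y.cells := by
    ext x
    simp only [YoungDiagram.mem_cells]
    rw [mem_iff_lt_bd, mem_iff_lt_bd, h]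
  cases X; cases Y; simpa using this


lemma isLowerSet_of_steps {S : Finset (ℕ × ℕ)}
    (h1 : ∀ r c : ℕ, (r + 1, c) ∈ S → (r, c) ∈ S)
    (h2 : ∀ r c : ℕ, (r, c + 1) ∈ S → (r, c) ∈ S) :
    IsLowerSet (↑S : Set (ℕ × ℕ)) := by
  have hrow : ∀ k r c : ℕ, (r + k, c) ∈ S → (r, c) ∈ S := by
    intro k
    induction k with
    | zero => intro r c h; simpa using h
    | succ m ih =>
      intro r c h
      refine ih r c (h1 (r + m) c ?_)
      have : r + m + 1 = r + (m + 1) := by omega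
      rwa [this]
  have hcol : ∀ k r c : ℕ, (r, c + k) ∈ S → (r, c) ∈ S := by
    intro k
    induction k with
    | zero => intro r c h; simpa using h
    | succ m ih =>
      intro r c h
      refine ih r c (h2 r (c + m) ?_)
      have : c + m + 1 = c + (m + 1) := by omega
      rwa [this]
  rintro ⟨b1, b2⟩ ⟨a1, a2⟩ ⟨hle1, hle2⟩ hmem
  simp only [Finset.mem_coe] at *
  have e1 : a1 + (b1 - a1) = b1 := by omega
  have e2 : a2 + (b2 - a2) = b2 := by omega
  refine hcol (b2 - a2) a1 a2 (hrow (b1 - a1) a1 (a2 + (b2 - a2)) ?_)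
  rw [e1, e2]
  exact hmem

lemma canAdd_iff {lam : YoungDiagram} {n : ℕ} (hn : 1 ≤ n) {i : ℤ} :
    canAdd lam n i ↔
      bd lam (i + 1) = bd lam i ∧ bd lam (i - n) = bd lam (i - n + 1) + 1 := by
  have hin : i ∈ band n i := mem_band.2 ⟨by omega, le_rfl⟩
  have hi'in : i - n + 1 ∈ band n i := mem_band.2 ⟨le_rfl, by omega⟩
  constructor
  · intro h
    constructor
    · -- head condition
      have hle : bd lam (i + 1) ≤ bd lam i := bd_succ_le lam i
      rcases Nat.eq_zero_or_pos (bd lam i) with h0 | h0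
      · omega
      · -- the cell above the head cell is in the shape, hence in lam
        have hv := bd_valid lam i
        have hle' : ((bd lam i - 1 : ℕ), ((bd lam i : ℤ) + i).toNat) ≤ cellOf lam i := by
          rw [cellOf]
          exact Prod.mk_le_mk.2 ⟨by omega, le_rfl⟩
        have hx : (bd lam i - 1, ((bd lam i : ℤ) + i).toNat) ∈ shape lam n i := by
          have := h hle' (Finset.mem_coe.2 (mem_shape.2 (Or.inr ⟨i, hin, rfl⟩)))
          exact Finset.mem_coe.1 this
        rcases mem_shape.1 (Finset.mem_coe.1 hx) with hl | ⟨d', hd', hx'⟩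
        · rw [mem_iff_lt_bd] at hl
          have hdg : dg (bd lam i - 1, ((bd lam i : ℤ) + i).toNat) = i + 1 := by
            rw [dg_mk]; omega
          rw [hdg] at hl
          dsimp only at hl
          omega
        · rw [eq_cellOf_iff] at hx'
          obtain ⟨-, h2⟩ := hx'
          dsimp only at h2
          rw [mem_band] at hd'
          omega
    · -- tail condition
      set i' : ℤ := i - n + 1 with hi'
      have hle1 : bd lam i' ≤ bd lam (i - n) := by
        have := bd_succ_le lam (i - n)
        have e : i - n + 1 = i' := rfl
        rwa [e] at this
      have hle2 : bd lam (i - n) ≤ bd lam i' + 1 := by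
        have := bd_le_succ_add lam (i - n)
        have e : i - n + 1 = i' := rfl
        rwa [e] at this
      have hv := bd_valid lam i'
      rcases eq_or_lt_of_le hv with h0 | h0
      · -- column 0 case
        have := bd_pred_of_zero (d := i') (lam := lam) h0.symm
        have e : i' - 1 = i - n := by omega
        rw [e] at this
        omega
      · -- the cell to the left of the tail cell is in the shape, hence in lam
        have hle' : (bd lam i', (((bd lam i' : ℤ) + i').toNat - 1 : ℕ)) ≤ cellOf lam i' := by
          rw [cellOf]
          exact Prod.mk_le_mk.2 ⟨le_rfl, by omega⟩
        have hx : (bd lam i', (((bd lam i' : ℤ) + i').toNat - 1 : ℕ)) ∈ shape lam n i := by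
          have := h hle' (Finset.mem_coe.2 (mem_shape.2 (Or.inr ⟨i', hi'in, rfl⟩)))
          exact Finset.mem_coe.1 this
        rcases mem_shape.1 (Finset.mem_coe.1 hx) with hl | ⟨d', hd', hx'⟩
        · rw [mem_iff_lt_bd] at hl
          have hdg : dg (bd lam i', (((bd lam i' : ℤ) + i').toNat - 1 : ℕ)) = i - n := by
            rw [dg_mk]; omega
          rw [hdg] at hl
          dsimp only at hl
          omega
        · rw [eq_cellOf_iff] at hx'
          obtain ⟨-, h2⟩ := hx'
          dsimp only at h2
          rw [mem_band] at hd'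
          omega
  · rintro ⟨hH, hT⟩
    refine isLowerSet_of_steps ?_ ?_
    · -- up neighbours
      intro r c hmem
      rcases mem_shape.1 hmem with hl | ⟨d, hd, hx⟩
      · exact mem_shape.2 (Or.inl (lam.up_left_mem (by omega) le_rfl hl))
      · rw [eq_cellOf_iff] at hx
        obtain ⟨hr, hc⟩ := hx
        dsimp only at hr hc
        rw [mem_band] at hd
        rcases eq_or_lt_of_le hd.2 with hdi | hdi
        · -- d = i : use head condition
          subst hdi
          refine mem_shape.2 (Or.inl ?_)
          rw [mem_iff_lt_bd]
          have hdg : dg (r, c) = d + 1 := by rw [dg_mk]; omega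
          rw [hdg]
          omega
        · -- d < i : d + 1 in band
          have hd1 : d + 1 ∈ band n i := mem_band.2 ⟨by omega, by omega⟩
          have hs1 : bd lam (d + 1) ≤ bd lam d := bd_succ_le lam d
          have hs2 : bd lam d ≤ bd lam (d + 1) + 1 := bd_le_succ_add lam d
          rcases Nat.lt_or_ge r (bd lam (d + 1)) with hlt | hge
          · refine mem_shape.2 (Or.inl ?_)
            rw [mem_iff_lt_bd]
            have hdg : dg (r, c) = d + 1 := by rw [dg_mk]; omega
            rw [hdg]
            exact hlt
          · refine mem_shape.2 (Or.inr ⟨d + 1, hd1, ?_⟩)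
            rw [eq_cellOf_iff]
            exact ⟨by dsimp only; omega, by dsimp only; omega⟩
    · -- left neighbours
      intro r c hmem
      rcases mem_shape.1 hmem with hl | ⟨d, hd, hx⟩
      · exact mem_shape.2 (Or.inl (lam.up_left_mem le_rfl (by omega) hl))
      · rw [eq_cellOf_iff] at hx
        obtain ⟨hr, hc⟩ := hx
        dsimp only at hr hc
        rw [mem_band] at hd
        rcases eq_or_lt_of_le hd.1 with hdi | hdi
        · -- d = i - n + 1 : use tail condition
          subst hdi
          refine mem_shape.2 (Or.inl ?_)
          rw [mem_iff_lt_bd]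
          have hdg : dg (r, c) = i - n := by rw [dg_mk]; omega
          rw [hdg]
          omega
        · -- d > i - n + 1 : d - 1 in band
          have hd1 : d - 1 ∈ band n i := mem_band.2 ⟨by omega, by omega⟩
          have hs1 : bd lam d ≤ bd lam (d - 1) := by
            have := bd_succ_le lam (d - 1)
            have e : d - 1 + 1 = d := by omega
            rwa [e] at this
          have hs2 : bd lam (d - 1) ≤ bd lam d + 1 := by
            have := bd_le_succ_add lam (d - 1)
            have e : d - 1 + 1 = d := by omega
            rwa [e] at this
          rcases Nat.lt_or_ge r (bd lam (d - 1)) with hlt | hge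
          · refine mem_shape.2 (Or.inl ?_)
            rw [mem_iff_lt_bd]
            have hdg : dg (r, c) = d - 1 := by rw [dg_mk]; omega
            rw [hdg]
            exact hlt
          · refine mem_shape.2 (Or.inr ⟨d - 1, hd1, ?_⟩)
            rw [eq_cellOf_iff]
            exact ⟨by dsimp only; omega, by dsimp only; omega⟩


lemma cellAdj_symm {a b : ℕ × ℕ} (h : CellAdj a b) : CellAdj b a := by
  unfold CellAdj at *; tauto

lemma cellAdj_cellOf (lam : YoungDiagram) (d : ℤ) :
    CellAdj (cellOf lam d) (cellOf lam (d + 1)) := by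
  have hs1 := bd_succ_le lam d
  have hs2 := bd_le_succ_add lam d
  have hv := bd_valid lam d
  have hv2 := bd_valid lam (d + 1)
  unfold CellAdj cellOf
  dsimp only
  rcases eq_or_lt_of_le hs1 with he | he
  · -- bd (d+1) = bd d : same row
    left
    exact ⟨by omega, Or.inr (by omega)⟩
  · -- bd d = bd (d+1) + 1 : same column
    right
    exact ⟨by omega, Or.inl (by omega)⟩

/-- cells of the candidate ribbon -/
noncomputable def rib (lam : YoungDiagram) (n : ℕ) (i : ℤ) : Finset (ℕ × ℕ) :=
  (band n i).image (cellOf lam)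

lemma mem_rib {lam : YoungDiagram} {n : ℕ} {i : ℤ} {x : ℕ × ℕ} :
    x ∈ rib lam n i ↔ dg x ∈ band n i ∧ x = cellOf lam (dg x) := by
  simp only [rib, Finset.mem_image]
  constructor
  · rintro ⟨d, hd, rfl⟩
    rw [dg_cellOf]
    exact ⟨hd, rfl⟩
  · rintro ⟨hd, hx⟩
    exact ⟨dg x, hd, hx.symm⟩

lemma skew_addR {lam : YoungDiagram} {n : ℕ} {i : ℤ} (h : canAdd lam n i) :
    skewCells lam (addR lam n i h) = rib lam n i := by
  ext x
  simp only [skewCells, Finset.mem_sdiff, YoungDiagram.mem_cells]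
  constructor
  · rintro ⟨hmem, hnot⟩
    rcases mem_addR.1 hmem with hl | ⟨d, hd, rfl⟩
    · exact absurd hl hnot
    · rw [mem_rib, dg_cellOf]
      exact ⟨hd, rfl⟩
  · intro hx
    obtain ⟨hd, hx'⟩ := mem_rib.1 hx
    constructor
    · exact mem_addR.2 (Or.inr ⟨dg x, hd, hx'⟩)
    · rw [hx']
      exact cellOf_not_mem lam (dg x)

lemma card_rib {lam : YoungDiagram} {n : ℕ} (hn : 1 ≤ n) {i : ℤ} :
    (rib lam n i).card = n := by
  rw [rib, Finset.card_image_of_injOn, band, Int.card_Icc]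
  · omega
  · intro a _ b _ hab
    have : dg (cellOf lam a) = dg (cellOf lam b) := by rw [hab]
    rwa [dg_cellOf, dg_cellOf] at this

lemma rib_chain {lam : YoungDiagram} {n : ℕ} {i : ℤ} (m : ℕ) (d : ℤ)
    (hd : d ∈ band n i) (hdm : d + m ∈ band n i) :
    Relation.ReflTransGen
      (fun x y => x ∈ rib lam n i ∧ y ∈ rib lam n i ∧ CellAdj x y)
      (cellOf lam d) (cellOf lam (d + m)) := by
  induction m with
  | zero => simpa using Relation.ReflTransGen.refl
  | succ k ih =>
    have hdk : d + k ∈ band n i := by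
      rw [mem_band] at *
      push_cast at hdm ⊢
      omega
    have step : (fun x y => x ∈ rib lam n i ∧ y ∈ rib lam n i ∧ CellAdj x y)
        (cellOf lam (d + k)) (cellOf lam (d + (k + 1 : ℕ))) := by
      refine ⟨?_, ?_, ?_⟩
      · rw [mem_rib, dg_cellOf]; exact ⟨hdk, rfl⟩
      · rw [mem_rib, dg_cellOf]; exact ⟨hdm, rfl⟩
      · have e : d + ((k + 1 : ℕ) : ℤ) = (d + k) + 1 := by push_cast; ring
        rw [e]
        exact cellAdj_cellOf lam (d + k)
    exact Relation.ReflTransGen.tail (ih hdk) step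

lemma isRibbon_addR {lam : YoungDiagram} {n : ℕ} (hn : 1 ≤ n) {i : ℤ}
    (h : canAdd lam n i) : IsRibbon n lam (addR lam n i h) i := by
  have hskew := skew_addR h
  refine ⟨?_, ?_, ?_, ?_, ?_⟩
  · -- lam ≤ addR
    intro x hx
    exact mem_addR.2 (Or.inl hx)
  · rw [hskew]; exact card_rib hn
  · -- connectivity
    rw [hskew]
    intro a ha b hb
    obtain ⟨hda, hxa⟩ := mem_rib.1 ha
    obtain ⟨hdb, hxb⟩ := mem_rib.1 hb
    have hsymm : Symmetric (fun x y => x ∈ rib lam n i ∧ y ∈ rib lam n i ∧ CellAdj x y) := by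
      rintro x y ⟨h1, h2, h3⟩
      exact ⟨h2, h1, cellAdj_symm h3⟩
    rcases le_total (dg a) (dg b) with hle | hle
    · have e : dg a + ((dg b - dg a).toNat : ℤ) = dg b := by omega
      have := rib_chain (lam := lam) (dg b - dg a).toNat (dg a) hda (by rwa [e])
      rw [e, ← hxa, ← hxb] at this
      exact this
    · have e : dg b + ((dg a - dg b).toNat : ℤ) = dg a := by omega
      have := rib_chain (lam := lam) (dg a - dg b).toNat (dg b) hdb (by rwa [e])
      rw [e, ← hxa, ← hxb] at this
      haveI hS : Std.Symm (fun x y => x ∈ rib lam n i ∧ y ∈ rib lam n i ∧ CellAdj x y) :=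
        ⟨fun _ _ h => hsymm h⟩
      exact Std.Symm.symm _ _ this
  · -- no 2x2
    rw [hskew]
    rintro ⟨r, c, h1, -, -, h4⟩
    obtain ⟨hd1, hx1⟩ := mem_rib.1 h1
    obtain ⟨hd4, hx4⟩ := mem_rib.1 h4
    have e : dg (r, c) = dg (r + 1, c + 1) := by rw [dg_mk, dg_mk]; push_cast; ring
    rw [e] at hx1
    have : (r : ℕ) = r + 1 := by
      have := hx1.trans hx4.symm
      exact congrArg Prod.fst this
    omega
  · -- head
    refine ⟨cellOf lam i, ?_, ?_, ?_⟩
    · rw [hskew, mem_rib, dg_cellOf]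
      exact ⟨mem_band.2 ⟨by omega, le_rfl⟩, rfl⟩
    · have := dg_cellOf lam i
      rw [dg] at this
      exact this
    · intro p hp
      rw [hskew] at hp
      obtain ⟨hd, -⟩ := mem_rib.1 hp
      have h1 : dg p ≤ i := (mem_band.1 hd).2
      have h2 : dg (cellOf lam i) = i := dg_cellOf lam i
      rw [dg] at h1 h2
      omega

lemma yd_cells_ext {X Y : YoungDiagram} (h : X.cells = Y.cells) : X = Y := by
  cases X; cases Y; simpa using h

lemma bd_mono_of_le {lam mu : YoungDiagram} (h : lam ≤ mu) (d : ℤ) :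
    bd lam d ≤ bd mu d := by
  by_contra hlt
  push_neg at hlt
  have hin : inD lam d (bd mu d) := inD_iff.2 ⟨bd_valid mu d, hlt⟩
  exact (bd_spec mu d).2 ⟨bd_valid mu d, h hin.2⟩

lemma mem_skew {lam mu : YoungDiagram} {x : ℕ × ℕ} :
    x ∈ skewCells lam mu ↔ x ∈ mu ∧ x ∉ lam := by
  simp [skewCells]

lemma cellAdj_dg {x y : ℕ × ℕ} (h : CellAdj x y) : dg y = dg x + 1 ∨ dg y = dg x - 1 := by
  unfold CellAdj at h
  unfold dg
  rcases h with ⟨h1, h2 | h2⟩ | ⟨h1, h2 | h2⟩ <;> omega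

lemma isRibbon_eq {n : ℕ} (hn : 1 ≤ n) {lam mu : YoungDiagram} {i : ℤ}
    (h : IsRibbon n lam mu i) :
    ∃ hc : canAdd lam n i, mu = addR lam n i hc := by
  obtain ⟨hle, hcard, hconn, h2x2, p, hp, hpi, hpmax⟩ := h
  -- step 1 : at most one new cell on each diagonal
  have step1 : ∀ d : ℤ, bd mu d ≤ bd lam d + 1 := by
    intro d
    by_contra hgt
    push_neg at hgt
    have hv : 0 ≤ (bd lam d : ℤ) + d := bd_valid lam d
    set r := bd lam d with hr
    set c := ((r : ℤ) + d).toNat with hc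
    have hx1 : (r, c) ∈ skewCells lam mu := by
      rw [mem_skew]
      constructor
      · exact (inD_iff.2 ⟨hv, by omega⟩ : inD mu d r).2
      · intro hmem
        have := (mem_iff_inD.1 hmem)
        rw [inD_iff] at this
        have hdg : dg (r, c) = d := by rw [dg_mk]; omega
        rw [hdg] at this
        omega
    have hx4 : ((r + 1 : ℕ), (c + 1 : ℕ)) ∈ skewCells lam mu := by
      rw [mem_skew]
      have hin : inD mu d (r + 1) := inD_iff.2 ⟨by push_cast; omega, by omega⟩
      have hin2 := hin.2
      have he : (((r + 1 : ℕ) : ℤ) + d).toNat = c + 1 := by push_cast; omega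
      rw [he] at hin2
      constructor
      · exact hin2
      · intro hmem
        have := (mem_iff_inD.1 hmem)
        rw [inD_iff] at this
        have hdg : dg ((r + 1 : ℕ), (c + 1 : ℕ)) = d := by rw [dg_mk]; push_cast; omega
        rw [hdg] at this
        omega
    have hx2 : ((r + 1 : ℕ), c) ∈ skewCells lam mu := by
      rw [mem_skew]
      constructor
      · exact mu.up_left_mem le_rfl (by omega) (mem_skew.1 hx4).1
      · intro hmem
        exact (mem_skew.1 hx1).2 (lam.up_left_mem (by omega) le_rfl hmem)
    have hx3 : (r, (c + 1 : ℕ)) ∈ skewCells lam mu := by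
      rw [mem_skew]
      constructor
      · exact mu.up_left_mem (by omega) le_rfl (mem_skew.1 hx4).1
      · intro hmem
        exact (mem_skew.1 hx1).2 (lam.up_left_mem le_rfl (by omega) hmem)
    exact h2x2 ⟨r, c, hx1, hx2, hx3, hx4⟩
  -- step 2 : each skew cell is the boundary cell of its diagonal
  have step2 : ∀ x ∈ skewCells lam mu, x.1 = bd lam (dg x) ∧
      bd mu (dg x) = bd lam (dg x) + 1 ∧ x = cellOf lam (dg x) := by
    intro x hx
    obtain ⟨hmem, hnot⟩ := mem_skew.1 hx
    rw [mem_iff_lt_bd] at hmem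
    rw [mem_iff_lt_bd] at hnot
    push_neg at hnot
    have h1 := step1 (dg x)
    have h2 := bd_mono_of_le hle (dg x)
    refine ⟨by omega, by omega, ?_⟩
    rw [eq_cellOf_iff]
    exact ⟨by omega, by unfold dg; omega⟩
  -- step 3 : intermediate value property for diagonals
  have ivt : ∀ x ∈ skewCells lam mu, ∀ y ∈ skewCells lam mu, ∀ m : ℤ,
      min (dg x) (dg y) ≤ m → m ≤ max (dg x) (dg y) → ∃ z ∈ skewCells lam mu, dg z = m := by
    intro x hx y hy
    have hrtg := hconn x hx y hy
    clear hy
    induction hrtg with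
    | refl =>
      intro m h1 h2
      refine ⟨x, hx, ?_⟩
      omega
    | tail hab hbc ih =>
      rename_i b c'
      obtain ⟨hb, hc', hadj⟩ := hbc
      have hdg := cellAdj_dg hadj
      intro m h1 h2
      by_cases hbet : min (dg x) (dg b) ≤ m ∧ m ≤ max (dg x) (dg b)
      · exact ih m hbet.1 hbet.2
      · refine ⟨c', hc', ?_⟩
        omega
  -- step 4 : the set of diagonals is exactly the band
  set D := (skewCells lam mu).image dg with hD
  have hpd : dg p = i := hpi
  have hiD : i ∈ D := Finset.mem_image.2 ⟨p, hp, hpd⟩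
  have hDne : D.Nonempty := ⟨i, hiD⟩
  have hcardD : D.card = n := by
    rw [hD, Finset.card_image_of_injOn, hcard]
    intro a ha b hb hab
    have h1 := (step2 a ha).2.2
    have h2 := (step2 b hb).2.2
    rw [h1, h2, hab]
  have hDmax : ∀ d ∈ D, d ≤ i := by
    intro d hd
    obtain ⟨x, hx, rfl⟩ := Finset.mem_image.1 hd
    have h1 := hpmax x hx
    unfold dg
    omega
  set m0 := D.min' hDne with hm0
  have hDicc : D = Finset.Icc m0 i := by
    ext d
    rw [Finset.mem_Icc]
    constructor
    · intro hd
      exact ⟨D.min'_le d hd, hDmax d hd⟩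
    · rintro ⟨h1, h2⟩
      obtain ⟨x, hx, hxd⟩ := Finset.mem_image.1 (D.min'_mem hDne)
      obtain ⟨z, hz, hzd⟩ := ivt x hx p hp d (by omega) (by omega)
      exact Finset.mem_image.2 ⟨z, hz, hzd⟩
  have hm0val : m0 = i - n + 1 := by
    have := hcardD
    rw [hDicc, Int.card_Icc] at this
    have hle' : m0 ≤ i := hDmax m0 (D.min'_mem hDne)
    omega
  have hDband : D = band n i := by
    rw [hDicc, hm0val, band]
  -- step 5 : bd of mu
  have step5 : ∀ d : ℤ, bd mu d = bd lam d + (if d ∈ band n i then 1 else 0) := by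
    intro d
    by_cases hd : d ∈ band n i
    · simp only [hd, if_true]
      rw [← hDband] at hd
      obtain ⟨x, hx, rfl⟩ := Finset.mem_image.1 hd
      exact (step2 x hx).2.1
    · simp only [hd, if_false, add_zero]
      have h2 := bd_mono_of_le hle d
      by_contra hne
      have hgt : bd lam d < bd mu d := by omega
      have hv := bd_valid lam d
      have hin : inD mu d (bd lam d) := inD_iff.2 ⟨hv, hgt⟩
      have hxs : (bd lam d, (((bd lam d : ℤ) + d).toNat : ℕ)) ∈ skewCells lam mu := by
        rw [mem_skew]
        refine ⟨hin.2, ?_⟩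
        intro hmem
        rw [mem_iff_lt_bd] at hmem
        have hdg : dg (bd lam d, (((bd lam d : ℤ) + d).toNat : ℕ)) = d := by
          rw [dg_mk]; omega
        rw [hdg] at hmem
        omega
      apply hd
      rw [← hDband]
      refine Finset.mem_image.2 ⟨_, hxs, ?_⟩
      rw [dg_mk]; omega
  -- step 6 : conclude
  have hcells : mu.cells = shape lam n i := by
    ext x
    rw [YoungDiagram.mem_cells, mem_iff_lt_bd, step5 (dg x), mem_shape]
    constructor
    · intro hlt
      by_cases hd : dg x ∈ band n i
      · simp only [hd, if_true] at hlt
        rcases Nat.lt_or_ge x.1 (bd lam (dg x)) with h1 | h1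
        · exact Or.inl (mem_iff_lt_bd.2 h1)
        · refine Or.inr ⟨dg x, hd, ?_⟩
          rw [eq_cellOf_iff]
          exact ⟨by omega, by unfold dg; omega⟩
      · simp only [hd, if_false, add_zero] at hlt
        exact Or.inl (mem_iff_lt_bd.2 hlt)
    · rintro (hmem | ⟨d, hd, rfl⟩)
      · rw [mem_iff_lt_bd] at hmem
        split <;> omega
      · rw [dg_cellOf]
        simp only [hd, if_true]
        have : (cellOf lam d).1 = bd lam d := rfl
        omega
  have hc : canAdd lam n i := by
    unfold canAdd
    rw [← hcells]
    exact mu.isLowerSet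
  refine ⟨hc, yd_cells_ext ?_⟩
  exact hcells

lemma image_bd_Icc (lam : YoungDiagram) (a : ℤ) (m : ℕ) :
    (Finset.Icc a (a + m)).image (bd lam) =
      Finset.Icc (bd lam (a + m)) (bd lam a) := by
  induction m with
  | zero =>
    simp
  | succ k ih =>
    have e : a + ((k + 1 : ℕ) : ℤ) = (a + k) + 1 := by push_cast; ring
    rw [e]
    have hsplit : Finset.Icc a (a + k + 1) = insert (a + k + 1) (Finset.Icc a (a + k)) := by
      ext x
      simp only [Finset.mem_Icc, Finset.mem_insert]
      omega
    rw [hsplit, Finset.image_insert, ih]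
    have hs1 := bd_succ_le lam (a + k)
    have hs2 := bd_le_succ_add lam (a + k)
    have hs3 : bd lam (a + k) ≤ bd lam a := bd_anti lam (by omega)
    ext x
    simp only [Finset.mem_insert, Finset.mem_Icc]
    omega

lemma spin_addR {lam : YoungDiagram} {n : ℕ} (hn : 1 ≤ n) {i : ℤ} (h : canAdd lam n i) :
    spin lam (addR lam n i h) = bd lam (i - n + 1) - bd lam i := by
  unfold spin
  rw [skew_addR, rib, Finset.image_image]
  have himg : (band n i).image (Prod.fst ∘ cellOf lam) = (band n i).image (bd lam) := by
    apply Finset.image_congr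
    intro d _
    rfl
  rw [himg]
  have e : i = (i - n + 1) + ((n - 1 : ℕ) : ℤ) := by push_cast; omega
  have := image_bd_Icc lam (i - n + 1) (n - 1)
  rw [← e] at this
  rw [band, this, Nat.card_Icc]
  have hmono : bd lam i ≤ bd lam (i - n + 1) := bd_anti lam (by omega)
  omega

lemma exists_ribbon_iff {lam : YoungDiagram} {n : ℕ} (hn : 1 ≤ n) {i : ℤ} :
    (∃ mu, IsRibbon n lam mu i) ↔ canAdd lam n i := by
  constructor
  · rintro ⟨mu, hmu⟩
    obtain ⟨hc, -⟩ := isRibbon_eq hn hmu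
    exact hc
  · intro h
    exact ⟨addR lam n i h, isRibbon_addR hn h⟩

lemma uVec_eq {n : ℕ} (hn : 1 ≤ n) (i : ℤ) (lam : YoungDiagram) :
    uVec n i lam =
      if h : canAdd lam n i then
        (q ^ (bd lam (i - n + 1) - bd lam i)) • Finsupp.single (addR lam n i h) (1 : K)
      else 0 := by
  unfold uVec
  by_cases h : canAdd lam n i
  · have hex : ∃ mu, IsRibbon n lam mu i := ⟨addR lam n i h, isRibbon_addR hn h⟩
    rw [dif_pos hex, dif_pos h]
    have hspec := Classical.choose_spec hex
    obtain ⟨hc, heq⟩ := isRibbon_eq hn hspec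
    rw [heq, spin_addR hn hc]
  · rw [dif_neg h, dif_neg]
    rw [exists_ribbon_iff hn]
    exact h

lemma u_single (n : ℕ) (i : ℤ) (lam : YoungDiagram) (c : K) :
    u n i (Finsupp.single lam c) = c • uVec n i lam := by
  unfold u
  rw [Finsupp.lsum_single, LinearMap.toSpanSingleton_apply]

lemma canAdd_addR_iff {lam : YoungDiagram} {n : ℕ} (hn : 1 ≤ n) {a b : ℤ}
    (hb : canAdd lam n b) (h1 : a ≠ b) (h2 : a ≠ b - n) (h3 : a ≠ b + n) :
    canAdd (addR lam n b hb) n a ↔ canAdd lam n a := by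
  rw [canAdd_iff hn, canAdd_iff hn, bd_addR hb, bd_addR hb, bd_addR hb, bd_addR hb]
  simp only [mem_band]
  split_ifs <;> omega

lemma addR_addR_eq {lam : YoungDiagram} {n : ℕ} {a b : ℤ}
    (hb : canAdd lam n b) (ha : canAdd lam n a)
    (hba : canAdd (addR lam n b hb) n a) (hab : canAdd (addR lam n a ha) n b) :
    addR (addR lam n b hb) n a hba = addR (addR lam n a ha) n b hab := by
  apply bd_ext
  intro d
  rw [bd_addR hba, bd_addR hab, bd_addR hb, bd_addR ha]
  split_ifs <;> omega

lemma u_uVec_expand {n : ℕ} (hn : 1 ≤ n) (a b : ℤ) (lam : YoungDiagram) :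
    u n a (uVec n b lam) =
      if hb : canAdd lam n b then
        if hba : canAdd (addR lam n b hb) n a then
          (q ^ (bd lam (b - n + 1) - bd lam b) *
            q ^ (bd (addR lam n b hb) (a - n + 1) - bd (addR lam n b hb) a)) •
            Finsupp.single (addR (addR lam n b hb) n a hba) (1 : K)
        else 0
      else 0 := by
  rw [uVec_eq hn]
  by_cases hb : canAdd lam n b
  · rw [dif_pos hb, dif_pos hb, map_smul, u_single, one_smul, uVec_eq hn]
    by_cases hba : canAdd (addR lam n b hb) n a
    · rw [dif_pos hba, dif_pos hba, smul_smul]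
    · rw [dif_neg hba, dif_neg hba, smul_zero]
  · rw [dif_neg hb, dif_neg hb, map_zero]

/-- far commutation : `u_a u_b = u_b u_a` for `a - b ≥ n + 1` -/
lemma u_comm_far {n : ℕ} (hn : 1 ≤ n) {a b : ℤ} (hab : b + n + 1 ≤ a) :
    u n a * u n b = u n b * u n a := by
  have hab1 : a ≠ b := by omega
  have hab2 : a ≠ b - n := by omega
  have hab3 : a ≠ b + n := by omega
  have hba1 : b ≠ a := by omega
  have hba2 : b ≠ a - n := by omega
  have hba3 : b ≠ a + n := by omega
  refine Finsupp.lhom_ext fun lam c => ?_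
  rw [Module.End.mul_apply, Module.End.mul_apply, u_single, u_single, map_smul, map_smul]
  congr 1
  rw [u_uVec_expand hn, u_uVec_expand hn]
  by_cases hb : canAdd lam n b
  · by_cases hba : canAdd (addR lam n b hb) n a
    · have ha : canAdd lam n a := (canAdd_addR_iff hn hb hab1 hab2 hab3).1 hba
      have hba' : canAdd (addR lam n a ha) n b := (canAdd_addR_iff hn ha hba1 hba2 hba3).2 hb
      rw [dif_pos hb, dif_pos hba, dif_pos ha, dif_pos hba']
      rw [addR_addR_eq hb ha hba hba']
      have hbA : bd (addR lam n b hb) (a - n + 1) = bd lam (a - n + 1) := by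
        rw [bd_addR hb]; simp only [mem_band]; split_ifs <;> omega
      have hbB : bd (addR lam n b hb) a = bd lam a := by
        rw [bd_addR hb]; simp only [mem_band]; split_ifs <;> omega
      have haA : bd (addR lam n a ha) (b - n + 1) = bd lam (b - n + 1) := by
        rw [bd_addR ha]; simp only [mem_band]; split_ifs <;> omega
      have haB : bd (addR lam n a ha) b = bd lam b := by
        rw [bd_addR ha]; simp only [mem_band]; split_ifs <;> omega
      rw [hbA, hbB, haA, haB, mul_comm]
    · rw [dif_pos hb, dif_neg hba]
      by_cases ha : canAdd lam n a
      · have : ¬ canAdd (addR lam n a ha) n b := by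
          intro hba'
          exact hba ((canAdd_addR_iff hn hb hab1 hab2 hab3).2 ha)
        rw [dif_pos ha, dif_neg this]
      · rw [dif_neg ha]
  · rw [dif_neg hb]
    by_cases ha : canAdd lam n a
    · have : ¬ canAdd (addR lam n a ha) n b := by
        intro hba'
        exact hb ((canAdd_addR_iff hn ha hba1 hba2 hba3).1 hba')
      rw [dif_pos ha, dif_neg this]
    · rw [dif_neg ha]

/-- near commutation : `u_a u_b = q² u_b u_a` for `0 < a - b < n` -/
lemma u_qcomm {n : ℕ} (hn : 1 ≤ n) {a b : ℤ} (h1 : 0 < a - b) (h2 : a - b < n) :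
    u n a * u n b = (q ^ 2 : K) • (u n b * u n a) := by
  have hab1 : a ≠ b := by omega
  have hab2 : a ≠ b - n := by omega
  have hab3 : a ≠ b + n := by omega
  have hba1 : b ≠ a := by omega
  have hba2 : b ≠ a - n := by omega
  have hba3 : b ≠ a + n := by omega
  refine Finsupp.lhom_ext fun lam c => ?_
  rw [Module.End.mul_apply, LinearMap.smul_apply, Module.End.mul_apply,
    u_single, u_single, map_smul, map_smul, smul_comm (q ^ 2 : K) c]
  congr 1
  rw [u_uVec_expand hn, u_uVec_expand hn]
  by_cases hb : canAdd lam n b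
  · by_cases hba : canAdd (addR lam n b hb) n a
    · have ha : canAdd lam n a := (canAdd_addR_iff hn hb hab1 hab2 hab3).1 hba
      have hba' : canAdd (addR lam n a ha) n b := (canAdd_addR_iff hn ha hba1 hba2 hba3).2 hb
      rw [dif_pos hb, dif_pos hba, dif_pos ha, dif_pos hba']
      rw [addR_addR_eq hb ha hba hba', smul_smul]
      congr 1
      -- scalar identity
      have hbA : bd (addR lam n b hb) (a - n + 1) = bd lam (a - n + 1) + 1 := by
        rw [bd_addR hb]; simp only [mem_band]; split_ifs <;> omega
      have hbB : bd (addR lam n b hb) a = bd lam a := by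
        rw [bd_addR hb]; simp only [mem_band]; split_ifs <;> omega
      have haA : bd (addR lam n a ha) (b - n + 1) = bd lam (b - n + 1) := by
        rw [bd_addR ha]; simp only [mem_band]; split_ifs <;> omega
      have haB : bd (addR lam n a ha) b = bd lam b + 1 := by
        rw [bd_addR ha]; simp only [mem_band]; split_ifs <;> omega
      rw [hbA, hbB, haA, haB]
      -- key inequalities
      have key1 : bd lam (a - n) = bd lam (a - n + 1) + 1 := ((canAdd_iff hn).1 ha).2
      have key2 : bd lam (b - n + 1) ≥ bd lam (a - n) := bd_anti lam (by omega)
      have key3 : bd lam (a - n + 1) ≥ bd lam a := bd_anti lam (by omega)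
      have key4 : bd lam (b - n + 1) ≥ bd lam b := bd_anti lam (by omega)
      have key5 : bd lam (a - n + 1) ≥ bd lam b := bd_anti lam (by omega)
      have hexp : (bd lam (b - n + 1) - bd lam b) + (bd lam (a - n + 1) + 1 - bd lam a) =
          2 + ((bd lam (a - n + 1) - bd lam a) + (bd lam (b - n + 1) - (bd lam b + 1))) := by
        omega
      rw [← pow_add, ← pow_add, hexp, pow_add]
    · rw [dif_pos hb, dif_neg hba]
      by_cases ha : canAdd lam n a
      · have : ¬ canAdd (addR lam n a ha) n b := by
          intro hba'
          exact hba ((canAdd_addR_iff hn hb hab1 hab2 hab3).2 ha)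
        rw [dif_pos ha, dif_neg this, smul_zero]
      · rw [dif_neg ha, smul_zero]
  · rw [dif_neg hb]
    by_cases ha : canAdd lam n a
    · have : ¬ canAdd (addR lam n a ha) n b := by
        intro hba'
        exact hb ((canAdd_addR_iff hn ha hba1 hba2 hba3).1 hba')
      rw [dif_pos ha, dif_neg this, smul_zero]
    · rw [dif_neg ha, smul_zero]

lemma end_mul_smul (c : K) (X Y : Module.End K F) : X * (c • Y) = c • (X * Y) := by
  apply LinearMap.ext
  intro v
  simp only [Module.End.mul_apply, LinearMap.smul_apply, map_smul]

lemma end_smul_mul (c : K) (X Y : Module.End K F) : (c • X) * Y = c • (X * Y) := by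
  apply LinearMap.ext
  intro v
  simp only [Module.End.mul_apply, LinearMap.smul_apply]

end RS

/-- the Knuth-like relations for ribbon Schur operators: for `i < j < k` or
`i > j > k`, `u_i u_k u_j = u_k u_i u_j` or `u_j u_i u_k`, and `u_j u_k u_i = u_j u_i u_k`
or `u_k u_i u_j`, according as `u_i` and `u_k` commute (`|i - k| ≥ n + 1`) or not. -/
theorem knuth_like_relations (n : ℕ) (hn : 1 ≤ n) (i j k : ℤ)
    (h : (i < j ∧ j < k) ∨ (k < j ∧ j < i)) :
    ((n : ℤ) + 1 ≤ |i - k| →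
      u n i * u n k * u n j = u n k * u n i * u n j ∧
      u n j * u n k * u n i = u n j * u n i * u n k) ∧
    (|i - k| < (n : ℤ) + 1 →
      u n i * u n k * u n j = u n j * u n i * u n k ∧
      u n j * u n k * u n i = u n k * u n i * u n j) := by
  have hq2 : (q ^ 2 : K) ≠ 0 := pow_ne_zero _ RatFunc.X_ne_zero
  have hcancel : ∀ X Y : Module.End K F, (q ^ 2 : K) • X = (q ^ 2 : K) • Y → X = Y := by
    intro X Y hxy
    have h2 := congrArg (fun Z : Module.End K F => (q ^ 2 : K)⁻¹ • Z) hxy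
    simpa [smul_smul, inv_mul_cancel₀ hq2] using h2
  constructor
  · -- far case : u_i and u_k commute
    intro hfar
    have hcomm : u n i * u n k = u n k * u n i := by
      rcases abs_cases (i - k) with ⟨he, -⟩ | ⟨he, -⟩ <;> rw [he] at hfar
      · exact RS.u_comm_far hn (by omega)
      · exact (RS.u_comm_far hn (by omega)).symm
    constructor
    · rw [hcomm]
    · rw [mul_assoc, mul_assoc, hcomm]
  · -- near case
    intro hnear
    obtain ⟨hb1, hb2⟩ := abs_lt.1 hnear
    rcases h with ⟨h1, h2⟩ | ⟨h1, h2⟩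
    · -- i < j < k
      have hki : k - i ≤ n := by omega
      have r1 : u n k * u n j = (q ^ 2 : K) • (u n j * u n k) :=
        RS.u_qcomm hn (by omega) (by omega)
      have r2 : u n j * u n i = (q ^ 2 : K) • (u n i * u n j) :=
        RS.u_qcomm hn (by omega) (by omega)
      constructor
      · calc u n i * u n k * u n j
            = u n i * (u n k * u n j) := by rw [mul_assoc]
          _ = u n i * ((q ^ 2 : K) • (u n j * u n k)) := by rw [r1]
          _ = (q ^ 2 : K) • (u n i * (u n j * u n k)) := by rw [RS.end_mul_smul]
          _ = ((q ^ 2 : K) • (u n i * u n j)) * u n k := by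
              rw [RS.end_smul_mul, mul_assoc]
          _ = (u n j * u n i) * u n k := by rw [← r2]
      · apply hcancel
        calc (q ^ 2 : K) • (u n j * u n k * u n i)
            = ((q ^ 2 : K) • (u n j * u n k)) * u n i := by rw [RS.end_smul_mul]
          _ = (u n k * u n j) * u n i := by rw [← r1]
          _ = u n k * (u n j * u n i) := by rw [mul_assoc]
          _ = u n k * ((q ^ 2 : K) • (u n i * u n j)) := by rw [r2]
          _ = (q ^ 2 : K) • (u n k * (u n i * u n j)) := by rw [RS.end_mul_smul]
          _ = (q ^ 2 : K) • (u n k * u n i * u n j) := by rw [mul_assoc]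
    · -- k < j < i
      have hik : i - k ≤ n := by omega
      have r1 : u n j * u n k = (q ^ 2 : K) • (u n k * u n j) :=
        RS.u_qcomm hn (by omega) (by omega)
      have r2 : u n i * u n j = (q ^ 2 : K) • (u n j * u n i) :=
        RS.u_qcomm hn (by omega) (by omega)
      constructor
      · apply hcancel
        calc (q ^ 2 : K) • (u n i * u n k * u n j)
            = u n i * ((q ^ 2 : K) • (u n k * u n j)) := by
              rw [RS.end_mul_smul, mul_assoc]
          _ = u n i * (u n j * u n k) := by rw [← r1]
          _ = (u n i * u n j) * u n k := by rw [mul_assoc]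
          _ = ((q ^ 2 : K) • (u n j * u n i)) * u n k := by rw [r2]
          _ = (q ^ 2 : K) • (u n j * u n i * u n k) := by rw [RS.end_smul_mul]
      · calc u n j * u n k * u n i
            = ((q ^ 2 : K) • (u n k * u n j)) * u n i := by rw [← r1]
          _ = (q ^ 2 : K) • (u n k * (u n j * u n i)) := by
              rw [RS.end_smul_mul, mul_assoc]
          _ = u n k * ((q ^ 2 : K) • (u n j * u n i)) := by rw [RS.end_mul_smul]
          _ = u n k * (u n i * u n j) := by rw [← r2]
          _ = u n k * u n i * u n j := by rw [mul_assoc]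



end RibbonSchur
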